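/- Let n = 2^k with k ≥ 2 and define s_n(t) = ∑_{a ∈ G_n^1(1)} (w^{at} − w^{−at})/i with w = e^{2πi/n}. Then s_n(t) = 2^{k−1} if t ≡ 2^{k−2} (mod n), s_n(t) = −2^{k−1} if t ≡ 3·2^{k−2} (mod n), and s_n(t) = 0 otherwise. -/

import Mathlib

open Finset

/-- `G_n^1(1) = {a : 1 ≤ a ≤ n-1, gcd(a,n)=1, a ≡ 1 (mod 4)}`. -/
def Grone (n r : ℕ) : Finset ℕ :=
  (Finset.range n).filter (fun a => 1 ≤ a ∧ Nat.gcd a n = 1 ∧ a % 4 = r)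

/-- `s_n(t) = ∑_{a ∈ G_n^1(1)} 2 sin(2πat/n)`. -/
noncomputable def sSum (n t : ℕ) : ℝ :=
  ∑ a ∈ Grone n 1, 2 * Real.sin (2 * Real.pi * a * t / n)

/-!
Write `n = 4m` with `m = 2 ^ (k - 2)`. The elements of `G_n^1(1)` are exactly `4j + 1` for
`j < m`, so the angles `2π(4j + 1)t/n = πt/(2m) + 2πjt/m` run through an arithmetic progression
of common difference `2πt/m`. If `m ∤ t`, the corresponding exponentials form a full geometric
sum over the nontrivial `m`-th root of unity `e^{2πit/m}`, which vanishes. If `t = ms`, every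
term equals `2 sin(πs/2)`, and `t mod n = m (s mod 4)` decides the sign.
-/

open Real

theorem IsPrimitiveRoot.geom_sum_pow_eq_zero {R : Type*} [CommRing R] [IsDomain R] {ζ : R}
    {m t : ℕ} (hζ : IsPrimitiveRoot ζ m) (h : ¬ m ∣ t) : ∑ j ∈ range m, (ζ ^ t) ^ j = 0 := by
  refine eq_zero_of_ne_zero_of_mul_left_eq_zero (sub_ne_zero_of_ne (a := 1) (b := ζ ^ t) ?_) ?_
  · rwa [Ne, eq_comm, hζ.pow_eq_one_iff_dvd]
  · rw [mul_neg_geom_sum, ← pow_mul, mul_comm, pow_mul, hζ.pow_eq_one, one_pow, sub_self]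

theorem sum_range_sin_add_eq_zero {m t : ℕ} (θ : ℝ) (h : ¬ m ∣ t) :
    ∑ j ∈ range m, sin (θ + 2 * π * j * t / m) = 0 := by
  rcases eq_or_ne m 0 with rfl | hm
  · simp
  have hterm (j : ℕ) : sin (θ + 2 * π * j * t / m) =
      (Complex.exp (θ * Complex.I) * (Complex.exp (2 * π * Complex.I / m) ^ t) ^ j).im := by
    rw [← pow_mul, ← Complex.exp_nat_mul, ← Complex.exp_add, ← Complex.exp_ofReal_mul_I_im]
    congr 2
    push_cast
    ring
  simp only [hterm, ← Complex.im_sum, ← mul_sum,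
    (Complex.isPrimitiveRoot_exp m hm).geom_sum_pow_eq_zero h, mul_zero, Complex.zero_im]

theorem sin_pi_mul_nat_div_two (s : ℕ) :
    sin (π * s / 2) = if s % 4 = 1 then 1 else if s % 4 = 3 then -1 else 0 := by
  have hs : π * s / 2 = π * (s % 4 : ℕ) / 2 + (s / 4 : ℕ) * (2 * π) := by
    have hcast : (s : ℝ) = (s % 4 : ℕ) + (s / 4 : ℕ) * 4 := by
      exact_mod_cast (Nat.mod_add_div' s 4).symm
    rw [hcast]
    ring
  rw [hs, sin_add_nat_mul_two_pi]
  have : s % 4 < 4 := Nat.mod_lt s (by norm_num)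
  interval_cases s % 4
  · simp
  · simp
  · simp
  · norm_num
    rw [show π * 3 / 2 = π / 2 + π by ring, sin_add_pi, sin_pi_div_two]

theorem grone_two_pow_add_two (k : ℕ) :
    Grone (2 ^ (k + 2)) 1 = (range (2 ^ k)).image (fun j => 4 * j + 1) := by
  have h4 : 2 ^ (k + 2) = 4 * 2 ^ k := by ring
  ext a
  simp only [Grone, mem_filter, mem_range, mem_image]
  constructor
  · rintro ⟨ha, -, -, ha4⟩
    exact ⟨a / 4, by omega, by omega⟩
  · rintro ⟨j, hj, rfl⟩
    have hodd : Nat.Coprime 2 (4 * j + 1) := Nat.prime_two.coprime_iff_not_dvd.mpr (by omega)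
    exact ⟨by omega, by omega, hodd.symm.pow_right _, by omega⟩

theorem sSum_two_pow_add_two (k t : ℕ) :
    sSum (2 ^ (k + 2)) t =
      ∑ j ∈ range (2 ^ k), 2 * sin (π * t / (2 * 2 ^ k) + 2 * π * j * t / (2 ^ k : ℕ)) := by
  rw [sSum, grone_two_pow_add_two, sum_image (fun x _ y _ h => by omega)]
  refine sum_congr rfl fun j _ => ?_
  congr 2
  push_cast
  field_simp
  ring

theorem sSum_two_pow_add_two_of_not_dvd {k t : ℕ} (h : ¬ 2 ^ k ∣ t) :
    sSum (2 ^ (k + 2)) t = 0 := by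
  rw [sSum_two_pow_add_two, ← mul_sum, sum_range_sin_add_eq_zero _ h, mul_zero]

theorem sSum_two_pow_add_two_mul (k s : ℕ) :
    sSum (2 ^ (k + 2)) (2 ^ k * s) = 2 ^ (k + 1) * sin (π * s / 2) := by
  have hterm (j : ℕ) : π * (2 ^ k * s : ℕ) / (2 * 2 ^ k) + 2 * π * j * (2 ^ k * s : ℕ) / (2 ^ k : ℕ)
      = π * s / 2 + (j * s : ℕ) * (2 * π) := by
    push_cast
    field_simp
  simp only [sSum_two_pow_add_two, hterm, sin_add_nat_mul_two_pi, sum_const, card_range,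
    nsmul_eq_mul]
  push_cast
  ring

theorem stmt17 (k : ℕ) (hk : 2 ≤ k) (n : ℕ) (hn : n = 2 ^ k) (t : ℕ) :
    (t % n = 2 ^ (k - 2) % n → sSum n t = 2 ^ (k - 1)) ∧
    (t % n = (3 * 2 ^ (k - 2)) % n → sSum n t = -(2 ^ (k - 1))) ∧
    (t % n ≠ 2 ^ (k - 2) % n → t % n ≠ (3 * 2 ^ (k - 2)) % n → sSum n t = 0) := by
  obtain ⟨k, rfl⟩ : ∃ j, k = j + 2 := ⟨k - 2, by omega⟩
  subst hn
  simp only [Nat.add_sub_cancel, show k + 2 - 1 = k + 1 by omega]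
  have hn : 2 ^ (k + 2) = 2 ^ k * 4 := by ring
  have hpos : 0 < 2 ^ k := by positivity
  have h1 : 2 ^ k % 2 ^ (k + 2) = 2 ^ k * 1 := by
    rw [hn, mul_one]
    exact Nat.mod_eq_of_lt (by omega)
  have h3 : 3 * 2 ^ k % 2 ^ (k + 2) = 2 ^ k * 3 := by
    rw [hn, mul_comm]
    exact Nat.mod_eq_of_lt (by omega)
  rw [h1, h3]
  by_cases hdvd : 2 ^ k ∣ t
  · obtain ⟨s, rfl⟩ := hdvd
    rw [sSum_two_pow_add_two_mul, sin_pi_mul_nat_div_two, hn, Nat.mul_mod_mul_left]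
    simp only [Nat.mul_left_cancel_iff hpos]
    split_ifs <;> simp_all [pow_succ]
  · have hdvd_of_mod (r : ℕ) (h : t % 2 ^ (k + 2) = 2 ^ k * r) : 2 ^ k ∣ t :=
      (Nat.dvd_mod_iff (pow_dvd_pow 2 (by omega))).mp (h ▸ dvd_mul_right _ _)
    exact ⟨fun h => absurd (hdvd_of_mod 1 h) hdvd, fun h => absurd (hdvd_of_mod 3 h) hdvd,
      fun _ _ => sSum_two_pow_add_two_of_not_dvd hdvd⟩
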